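/- Let f : ℝ → ℝ be continuous and bounded, differentiable with derivative f' ≥ 0, and let {t_i} be a sequence with t_i → ∞. Suppose there exist δ > 0 and a subsequence t_{i_j} with f'(t_{i_j}) ≥ δ² for all j. Then there exists a sequence τ_n → ∞ with |τ_n − t_{i_{j_n}}| ≤ 1/√n for a further subsequence t_{i_{j_n}} and f'(τ_n) < 1/√n. -/

import Mathlib

/-!
If `f` converges at infinity, its increments over intervals of fixed length `2r` tend to `0`,
so far out the derivative cannot stay `≥ r` on a whole interval `[s - r, s + r]`: by the mean
value inequality `f` would increase by at least `2r²` there. A bounded `f` with `f' ≥ 0` is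
monotone, hence convergent, and a diagonal extraction along the scales `r = 1/√(n+1)` gives the
times `τ_n`.
-/

open Filter Topology

lemma eventually_exists_deriv_lt_of_tendsto {f : ℝ → ℝ} {L : ℝ}
    (hf : Tendsto f atTop (𝓝 L)) (hfd : Differentiable ℝ f) {r : ℝ} (hr : 0 < r) :
    ∀ᶠ s in atTop, ∃ τ, |τ - s| ≤ r ∧ deriv f τ < r := by
  have hgap : Tendsto (fun s => f (s + r) - f (s - r)) atTop (𝓝 0) := by
    simpa [sub_eq_add_neg] using (hf.comp (tendsto_atTop_add_const_right _ r tendsto_id)).sub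
      (hf.comp (tendsto_atTop_add_const_right _ (-r) tendsto_id))
  filter_upwards [hgap.eventually (gt_mem_nhds (by positivity : 0 < 2 * r ^ 2))] with s hs
  by_contra! hge
  have hge_on : ∀ x ∈ interior (Set.Icc (s - r) (s + r)), r ≤ deriv f x := by
    rw [interior_Icc]
    exact fun x hx => hge x (abs_le.mpr ⟨by linarith [hx.1], by linarith [hx.2]⟩)
  have hincr := (convex_Icc (s - r) (s + r)).mul_sub_le_image_sub_of_le_deriv
    hfd.continuous.continuousOn hfd.differentiableOn hge_on
    (s - r) (Set.left_mem_Icc.mpr (by linarith)) (s + r) (Set.right_mem_Icc.mpr (by linarith))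
    (by linarith)
  nlinarith

lemma one_div_sqrt_succ_le_one (n : ℕ) : 1 / Real.sqrt (n + 1) ≤ 1 := by
  rw [div_le_one (Real.sqrt_pos.mpr (by positivity))]
  exact Real.one_le_sqrt.mpr (by linarith [n.cast_nonneg (α := ℝ)])

theorem stmt18_general (f : ℝ → ℝ)
    (hfb : ∃ M : ℝ, ∀ s, |f s| ≤ M)
    (hfd : Differentiable ℝ f) (hf' : ∀ s, 0 ≤ deriv f s)
    (t : ℕ → ℝ) (ht : Filter.Tendsto t Filter.atTop Filter.atTop)
    (j : ℕ → ℕ) (hj : StrictMono j) :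
    ∃ (jn : ℕ → ℕ) (τ : ℕ → ℝ), StrictMono jn ∧
      Filter.Tendsto τ Filter.atTop Filter.atTop ∧
      ∀ n : ℕ, |τ n - t (j (jn n))| ≤ 1 / Real.sqrt (n + 1) ∧
        deriv f (τ n) < 1 / Real.sqrt (n + 1) := by
  obtain ⟨M, hM⟩ := hfb
  have hbdd : BddAbove (Set.range f) :=
    ⟨M, by rintro _ ⟨s, rfl⟩; exact (abs_le.mp (hM s)).2⟩
  have hlim := tendsto_atTop_ciSup (monotone_of_deriv_nonneg hfd hf') hbdd
  have htj : Tendsto (fun k => t (j k)) atTop atTop := ht.comp hj.tendsto_atTop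
  obtain ⟨jn, hjn, hnear⟩ := extraction_forall_of_eventually fun n =>
    htj.eventually <| eventually_exists_deriv_lt_of_tendsto hlim hfd
      (r := 1 / Real.sqrt (n + 1)) (by positivity)
  choose τ hτ using hnear
  refine ⟨jn, τ, hjn, ?_, hτ⟩
  refine tendsto_atTop_mono (fun n => ?_)
    (tendsto_atTop_add_const_right _ (-1) (htj.comp hjn.tendsto_atTop))
  show t (j (jn n)) + -1 ≤ τ n
  have hτ_ge := (abs_le.mp (hτ n).1).1
  have hr_le := one_div_sqrt_succ_le_one n
  linarith

/-- Abstract version of Lemma 2.5: if `f` is continuous, bounded, differentiable with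
`f' ≥ 0`, `t_i → ∞`, and along a subsequence `f'(t_{i_j}) ≥ δ²`, then there are a further
subsequence and times `τ_n → ∞` with `|τ_n − t_{i_{j_n}}| ≤ 1/√(n+1)` and
`f'(τ_n) < 1/√(n+1)`. -/
theorem stmt18 (f : ℝ → ℝ) (hfc : Continuous f)
    (hfb : ∃ M : ℝ, ∀ s, |f s| ≤ M)
    (hfd : Differentiable ℝ f) (hf' : ∀ s, 0 ≤ deriv f s)
    (t : ℕ → ℝ) (ht : Filter.Tendsto t Filter.atTop Filter.atTop)
    (δ : ℝ) (hδ : 0 < δ) (j : ℕ → ℕ) (hj : StrictMono j)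
    (hj' : ∀ k, δ ^ 2 ≤ deriv f (t (j k))) :
    ∃ (jn : ℕ → ℕ) (τ : ℕ → ℝ), StrictMono jn ∧
      Filter.Tendsto τ Filter.atTop Filter.atTop ∧
      ∀ n : ℕ, |τ n - t (j (jn n))| ≤ 1 / Real.sqrt (n + 1) ∧
        deriv f (τ n) < 1 / Real.sqrt (n + 1) :=
  stmt18_general f hfb hfd hf' t ht j hj
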